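/- arXiv:2107.05875 — 4 statements merged into one kernel-verified Lean document; each statement's English description precedes it below -/
import Mathlib

section
/- In a Veldkamp n-gon, if vertices x and y are opposite (i.e., joined by a straight n-path) and z is a neighbor of y, then there exists a unique straight n-path from x to y whose penultimate vertex is z. -/
/-- A Veldkamp graph: a graph endowed, at each vertex `v`, with a symmetric
anti-reflexive "local opposition" relation `opp v` on the neighborhood of `v`
that is 2-plump. -/
structure VeldkampGraph (V : Type*) where
  adj : V → V → Prop
  adj_symm : ∀ u v, adj u v → adj v u
  adj_irrefl : ∀ v, ¬ adj v v
  opp : V → V → V → Prop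
  opp_adj_left : ∀ v x y, opp v x y → adj v x
  opp_adj_right : ∀ v x y, opp v x y → adj v y
  opp_symm : ∀ v x y, opp v x y → opp v y x
  opp_irrefl : ∀ v x, ¬ opp v x x
  plump2 : ∀ v x y, adj v x → adj v y → ∃ z, adj v z ∧ opp v z x ∧ opp v z y

namespace VeldkampGraph

variable {V : Type*} (Γ : VeldkampGraph V)

/-- `p 0, p 1, ..., p s` is an `s`-path. -/
def IsPath (s : ℕ) (p : ℕ → V) : Prop :=
  (∀ i, i < s → Γ.adj (p i) (p (i + 1))) ∧ ∀ i, i + 2 ≤ s → p i ≠ p (i + 2)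

/-- `p 0, ..., p s` is a straight `s`-path. -/
def IsStraight (s : ℕ) (p : ℕ → V) : Prop :=
  Γ.IsPath s p ∧ ∀ i, i + 2 ≤ s → Γ.opp (p (i + 1)) (p i) (p (i + 2))

/-- There is an `s`-path from `x` to `y`. -/
def HasPathLen (s : ℕ) (x y : V) : Prop :=
  ∃ p : ℕ → V, Γ.IsPath s p ∧ p 0 = x ∧ p s = y

/-- `dist (x, y) = k`. -/
def DistEq (x y : V) (k : ℕ) : Prop :=
  Γ.HasPathLen k x y ∧ ∀ j < k, ¬ Γ.HasPathLen j x y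

def Connected : Prop := ∀ x y : V, ∃ s, Γ.HasPathLen s x y

def Bipartite : Prop := ∃ P : Set V, ∀ u v, Γ.adj u v → (u ∈ P ↔ v ∉ P)

/-- A straight `m`-circuit, encoded as an `m`-periodic straight closed walk. -/
def IsClosedStraight (m : ℕ) (q : ℕ → V) : Prop :=
  (∀ i, Γ.adj (q i) (q (i + 1))) ∧ (∀ i, Γ.opp (q (i + 1)) (q i) (q (i + 2))) ∧
    ∀ i, q (i + m) = q i

/-- An `m`-circuit: an `m`-periodic closed walk through `m` distinct vertices. -/
def IsCircuit (m : ℕ) (q : ℕ → V) : Prop :=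
  (∀ i, Γ.adj (q i) (q (i + 1))) ∧ (∀ i, q (i + m) = q i) ∧
    ∀ i j, i < m → j < m → q i = q j → i = j

end VeldkampGraph

/-- A Veldkamp `n`-gon. -/
structure VeldkampNGon (V : Type*) (n : ℕ) extends VeldkampGraph V where
  two_le : 2 ≤ n
  connected : toVeldkampGraph.Connected
  bipartite : toVeldkampGraph.Bipartite
  vp2 : ∀ k, 1 ≤ k → k ≤ n - 1 → ∀ p j q, toVeldkampGraph.IsStraight k p →
    j ≤ k → toVeldkampGraph.IsStraight j q → q 0 = p 0 → q j = p k →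
    j = k ∧ ∀ i ≤ k, q i = p i
  vp3 : ∀ p, toVeldkampGraph.IsStraight (n + 1) p →
    ∃ q, toVeldkampGraph.IsClosedStraight (2 * n) q ∧ ∀ i ≤ n + 1, q i = p i

namespace VeldkampNGon

variable {V : Type*} {n : ℕ} (Γ : VeldkampNGon V n)

/-- Two vertices are opposite if there is a root (straight `n`-path) from one
to the other. -/
def Opp (x y : V) : Prop :=
  ∃ p, Γ.IsStraight n p ∧ p 0 = x ∧ p n = y

/-- The set of vertices opposite `x`. -/
def opSet (x : V) : Set V := {y | Γ.Opp x y}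

/-- Two edges are opposite if some straight `(n+1)`-path has them as its first
and last edges. -/
def EdgeOpp (e f : Sym2 V) : Prop :=
  ∃ p, Γ.IsStraight (n + 1) p ∧ s(p 0, p 1) = e ∧ s(p n, p (n + 1)) = f

end VeldkampNGon

/-!
Extending a root `x ⋯ u y` by an edge `y w` with `u ≡_y w` gives a straight `(n+1)`-path, which
lies on a straight `2n`-circuit (VP3); the other half of that circuit, read backwards, is a root
from `x` to `y` with penultimate vertex `w`. Doing this twice, through a neighbour `w` of `y`
opposite both `u` and `z` (2-plumpness), gives a root ending in `z y`. Two roots from `x` to `y`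
through `z` share the straight `(n-1)`-path from `x` to `z`, so they agree by VP2.
-/

namespace VeldkampGraph

variable {V : Type*} {Γ : VeldkampGraph V}

theorem isStraight_iff_adj_opp {s : ℕ} {p : ℕ → V} :
    Γ.IsStraight s p ↔ (∀ i < s, Γ.adj (p i) (p (i + 1))) ∧
      ∀ i, i + 2 ≤ s → Γ.opp (p (i + 1)) (p i) (p (i + 2)) := by
  refine ⟨fun hp => ⟨hp.1.1, hp.2⟩, fun ⟨hadj, hopp⟩ => ⟨⟨hadj, fun i hi heq => ?_⟩, hopp⟩⟩
  exact Γ.opp_irrefl _ _ (heq ▸ hopp i hi)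

theorem IsStraight.mono {s t : ℕ} {p : ℕ → V} (hp : Γ.IsStraight s p) (h : t ≤ s) :
    Γ.IsStraight t p :=
  ⟨⟨fun i hi => hp.1.1 i (hi.trans_le h), fun i hi => hp.1.2 i (hi.trans h)⟩,
    fun i hi => hp.2 i (hi.trans h)⟩

theorem IsStraight.congr {s : ℕ} {p q : ℕ → V} (hp : Γ.IsStraight s p)
    (h : ∀ i ≤ s, p i = q i) : Γ.IsStraight s q := by
  rw [isStraight_iff_adj_opp] at hp ⊢
  refine ⟨fun i hi => ?_, fun i hi => ?_⟩
  · rw [← h i (by omega), ← h (i + 1) hi]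
    exact hp.1 i hi
  · rw [← h i (by omega), ← h (i + 1) (by omega), ← h (i + 2) hi]
    exact hp.2 i hi

theorem isStraight_add_two_iff {s : ℕ} {p : ℕ → V} :
    Γ.IsStraight (s + 2) p ↔
      Γ.IsStraight (s + 1) p ∧ Γ.opp (p (s + 1)) (p s) (p (s + 2)) := by
  refine ⟨fun hp => ⟨hp.mono (by omega), hp.2 s le_rfl⟩, fun ⟨hp, hopp⟩ => ?_⟩
  rw [isStraight_iff_adj_opp] at hp ⊢
  refine ⟨fun i hi => ?_, fun i hi => ?_⟩
  · rcases Nat.lt_succ_iff_lt_or_eq.mp hi with hi | rfl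
    · exact hp.1 i hi
    · exact Γ.opp_adj_right _ _ _ hopp
  · rcases Nat.lt_succ_iff_lt_or_eq.mp hi with hi | hi
    · exact hp.2 i hi
    · obtain rfl : i = s := by omega
      exact hopp

theorem IsStraight.exists_extend {s : ℕ} {p : ℕ → V} {w : V} (hp : Γ.IsStraight (s + 1) p)
    (hw : Γ.opp (p (s + 1)) (p s) w) :
    ∃ q, Γ.IsStraight (s + 2) q ∧ (∀ i ≤ s + 1, q i = p i) ∧ q (s + 2) = w := by
  classical
  set q := Function.update p (s + 2) w
  have hq : ∀ i ≤ s + 1, q i = p i := fun i hi => Function.update_of_ne (by omega) _ _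
  have hqw : q (s + 2) = w := Function.update_self ..
  refine ⟨q, isStraight_add_two_iff.mpr ⟨hp.congr fun i hi => (hq i hi).symm, ?_⟩, hq, hqw⟩
  rwa [hq s (by omega), hq (s + 1) le_rfl, hqw]

theorem IsStraight.reverse {s : ℕ} {p : ℕ → V} (hp : Γ.IsStraight s p) :
    Γ.IsStraight s (fun i => p (s - i)) := by
  rw [isStraight_iff_adj_opp] at hp ⊢
  refine ⟨fun i hi => ?_, fun i hi => ?_⟩
  · obtain ⟨j, rfl⟩ : ∃ j, s = i + 1 + j := ⟨s - (i + 1), by omega⟩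
    rw [show i + 1 + j - i = j + 1 by omega, show i + 1 + j - (i + 1) = j by omega]
    exact Γ.adj_symm _ _ (hp.1 j (by omega))
  · obtain ⟨j, rfl⟩ : ∃ j, s = i + 2 + j := ⟨s - (i + 2), by omega⟩
    rw [show i + 2 + j - i = j + 2 by omega, show i + 2 + j - (i + 1) = j + 1 by omega,
      show i + 2 + j - (i + 2) = j by omega]
    exact Γ.opp_symm _ _ _ (hp.2 j (by omega))

theorem IsClosedStraight.isStraight_shift {m : ℕ} {c : ℕ → V} (hc : Γ.IsClosedStraight m c)
    (k s : ℕ) : Γ.IsStraight s (fun i => c (k + i)) :=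
  isStraight_iff_adj_opp.mpr ⟨fun i _ => hc.1 (k + i), fun i _ => hc.2.1 (k + i)⟩

end VeldkampGraph

namespace VeldkampNGon

variable {V : Type*} {n : ℕ} {Γ : VeldkampNGon V n}

theorem exists_root_of_opp_penultimate {p : ℕ → V} (hp : Γ.IsStraight n p) {w : V}
    (hw : Γ.opp (p n) (p (n - 1)) w) :
    ∃ r, Γ.IsStraight n r ∧ r 0 = p 0 ∧ r n = p n ∧ r (n - 1) = w := by
  obtain ⟨m, rfl⟩ : ∃ m, n = m + 1 := ⟨n - 1, by have := Γ.two_le; omega⟩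
  rw [Nat.add_sub_cancel] at hw ⊢
  obtain ⟨q, hq, hqp, hqw⟩ := hp.exists_extend hw
  obtain ⟨c, hc, hcq⟩ := Γ.vp3 q hq
  refine ⟨fun i => c (m + 1 + (m + 1 - i)), (hc.isStraight_shift (m + 1) (m + 1)).reverse, ?_,
    ?_, ?_⟩
  · have hper : c (0 + 2 * (m + 1)) = c 0 := hc.2.2 0
    simp only [Nat.sub_zero, ← two_mul, zero_add] at hper ⊢
    rw [hper, hcq 0 (by omega), hqp 0 (by omega)]
  · simp only [Nat.sub_self, add_zero]
    rw [hcq (m + 1) (by omega), hqp (m + 1) le_rfl]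
  · simp only [show m + 1 - m = 1 by omega]
    rw [hcq (m + 1 + 1) le_rfl, ← hqw]

theorem eqOn_of_penultimate_eq {p q : ℕ → V} (hp : Γ.IsStraight n p) (hq : Γ.IsStraight n q)
    (h0 : q 0 = p 0) (hn : q n = p n) (hpen : q (n - 1) = p (n - 1)) :
    ∀ i ≤ n, q i = p i := by
  have := Γ.two_le
  intro i hi
  rcases hi.lt_or_eq with hi | rfl
  · exact (Γ.vp2 (n - 1) (by omega) le_rfl p (n - 1) q (hp.mono (by omega)) le_rfl
      (hq.mono (by omega)) h0 hpen).2 i (by omega)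
  · exact hn

end VeldkampNGon

/-- In a Veldkamp `n`-gon, if `x` and `y` are opposite and `z` is a neighbor
of `y`, then there is a unique root from `x` to `y` whose penultimate vertex
is `z`. -/
theorem stmt0 {V : Type*} {n : ℕ} (Γ : VeldkampNGon V n) (x y z : V)
    (hxy : Γ.Opp x y) (hz : Γ.adj y z) :
    ∃ p : ℕ → V, (Γ.IsStraight n p ∧ p 0 = x ∧ p n = y ∧ p (n - 1) = z) ∧
      ∀ q : ℕ → V, Γ.IsStraight n q → q 0 = x → q n = y → q (n - 1) = z →
        ∀ i ≤ n, q i = p i := by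
  obtain ⟨m, rfl⟩ : ∃ m, n = m + 1 := ⟨n - 1, by have := Γ.two_le; omega⟩
  rw [Nat.add_sub_cancel]
  obtain ⟨p, hp, rfl, rfl⟩ := hxy
  obtain ⟨w, -, hwp, hwz⟩ :=
    Γ.plump2 (p (m + 1)) (p m) z (Γ.adj_symm _ _ (hp.1.1 m (by omega))) hz
  obtain ⟨r, hr, hr0, hrn, hrw⟩ :=
    VeldkampNGon.exists_root_of_opp_penultimate hp (Γ.opp_symm _ _ _ hwp)
  obtain ⟨s, hs, hs0, hsn, hsz⟩ :=
    VeldkampNGon.exists_root_of_opp_penultimate hr (by rwa [hrn, hrw])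
  refine ⟨s, ⟨hs, hs0.trans hr0, hsn.trans hrn, hsz⟩, fun q hq hq0 hqn hqz =>
    VeldkampNGon.eqOn_of_penultimate_eq hs hq (hq0.trans (hs0.trans hr0).symm)
      (hqn.trans (hsn.trans hrn).symm) (hqz.trans hsz.symm)⟩
end

section
/- In a Veldkamp n-gon, if the local opposition relation is trivial at some vertex v, then it is trivial at every vertex at even distance from v; if moreover n is odd, the local opposition relation is trivial at every vertex. -/
/-- The local opposition relation at `v` is trivial. -/
def VeldkampGraph.TrivialAt {V : Type*} (Γ : VeldkampGraph V) (v : V) : Prop :=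
  ∀ x y, Γ.adj v x → Γ.adj v y → x ≠ y → Γ.opp v x y

/-!
Using VP3 twice, a root from `u` to `v` can be turned at `u` so that it leaves through any
prescribed neighbour of `u`. Let the local opposition at `v` be trivial and `w` be opposite `v`.
Two distinct neighbours `x`, `y` of `w` start roots to `v`; by VP2 these arrive through distinct
neighbours of `v`, which are therefore opposite at `v`, so the first root followed by the last edge
of the second is a straight `(n+1)`-path. Its closing straight `2n`-circuit returns to `w` along the
second root, hence `x` and `y` are opposite at `w`. Two vertices at distance two are both opposite
some third vertex, which gives the claim for even distances. For odd `n`, a vertex opposite `v`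
reaches every neighbour of `v` by a walk of the even length `n - 1`.
-/

namespace VeldkampGraph

variable {V : Type*} {G : VeldkampGraph V} {s k m : ℕ} {p : ℕ → V}

theorem isStraight_of_adj_of_opp (hadj : ∀ i < s, G.adj (p i) (p (i + 1)))
    (hopp : ∀ i, i + 2 ≤ s → G.opp (p (i + 1)) (p i) (p (i + 2))) : G.IsStraight s p :=
  ⟨⟨hadj, fun i hi h => G.opp_irrefl _ _ (h ▸ hopp i hi)⟩, hopp⟩

namespace IsStraight

theorem adj (hp : G.IsStraight s p) {i : ℕ} (hi : i < s) : G.adj (p i) (p (i + 1)) :=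
  hp.1.1 i hi

theorem opp (hp : G.IsStraight s p) {i : ℕ} (hi : i + 2 ≤ s) :
    G.opp (p (i + 1)) (p i) (p (i + 2)) :=
  hp.2 i hi

theorem mono_s5 (hp : G.IsStraight s p) (hks : k ≤ s) : G.IsStraight k p :=
  isStraight_of_adj_of_opp (fun _ hi => hp.adj (by omega)) (fun _ hi => hp.opp (by omega))

theorem reverse_s5 (hp : G.IsStraight s p) : G.IsStraight s (fun i => p (s - i)) := by
  refine isStraight_of_adj_of_opp (fun i hi => ?_) (fun i hi => ?_)
  · have h := hp.adj (i := s - (i + 1)) (by omega)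
    rw [show s - (i + 1) + 1 = s - i by omega] at h
    exact G.adj_symm _ _ h
  · have h := hp.opp (i := s - (i + 2)) (by omega)
    rw [show s - (i + 2) + 1 = s - (i + 1) by omega, show s - (i + 2) + 2 = s - i by omega] at h
    exact G.opp_symm _ _ _ h

theorem snoc (hp : G.IsStraight k p) (hk : 1 ≤ k) {z : V} (hz : G.adj (p k) z)
    (ho : G.opp (p k) (p (k - 1)) z) : G.IsStraight (k + 1) (Function.update p (k + 1) z) := by
  refine isStraight_of_adj_of_opp (fun i hi => ?_) (fun i hi => ?_)
  · rw [Function.update_of_ne (by omega)]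
    rcases Nat.lt_or_ge i k with hik | hik
    · rw [Function.update_of_ne (by omega)]
      exact hp.adj hik
    · obtain rfl : i = k := by omega
      rwa [Function.update_self]
  · rw [Function.update_of_ne (by omega), Function.update_of_ne (by omega)]
    rcases Nat.lt_or_ge (i + 2) (k + 1) with hik | hik
    · rw [Function.update_of_ne (by omega)]
      exact hp.opp (by omega)
    · obtain rfl : i = k - 1 := by omega
      rw [show k - 1 + 2 = k + 1 by omega, Function.update_self, show k - 1 + 1 = k by omega]
      exact ho

theorem update_zero (hp : G.IsStraight s p) {w : V} (hw : G.adj w (p 1))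
    (ho : G.opp (p 1) w (p 2)) : G.IsStraight s (Function.update p 0 w) := by
  refine isStraight_of_adj_of_opp (fun i hi => ?_) (fun i hi => ?_)
  · rcases i with _ | i
    · simpa using hw
    · simpa using hp.adj hi
  · rcases i with _ | i
    · simpa using ho
    · simpa using hp.opp hi

theorem adj_pred (hp : G.IsStraight s p) (hs : 1 ≤ s) : G.adj (p s) (p (s - 1)) := by
  have h := hp.adj (i := s - 1) (by omega)
  rw [Nat.sub_add_cancel hs] at h
  exact G.adj_symm _ _ h

theorem exists_extend_s5 (hp : G.IsStraight k p) (hk : 1 ≤ k) (hkm : k ≤ m) :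
    ∃ q, G.IsStraight m q ∧ ∀ i ≤ k, q i = p i := by
  induction m, hkm using Nat.le_induction with
  | base => exact ⟨p, hp, fun _ _ => rfl⟩
  | succ m hkm ih =>
    obtain ⟨q, hq, hqp⟩ := ih
    have hback := hq.adj_pred (by omega)
    obtain ⟨z, hz, hzo, -⟩ := G.plump2 _ _ _ hback hback
    refine ⟨_, hq.snoc (by omega) hz (G.opp_symm _ _ _ hzo), fun i hi => ?_⟩
    rw [Function.update_of_ne (by omega), hqp i hi]

end IsStraight

theorem exists_isStraight_of_adj {a b : V} (hab : G.adj a b) (hm : 1 ≤ m) :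
    ∃ p, G.IsStraight m p ∧ p 0 = a ∧ p 1 = b := by
  have hp : G.IsStraight 1 (fun i => if i = 0 then a else b) :=
    isStraight_of_adj_of_opp (fun i hi => by obtain rfl : i = 0 := (by omega); simpa using hab)
      (fun i hi => by omega)
  obtain ⟨q, hq, hqp⟩ := hp.exists_extend_s5 le_rfl hm
  exact ⟨q, hq, hqp 0 (by omega), hqp 1 le_rfl⟩

theorem exists_isStraight_of_opp {a b c : V} (hab : G.adj a b) (ho : G.opp b a c) (hm : 2 ≤ m) :
    ∃ p, G.IsStraight m p ∧ p 0 = a ∧ p 1 = b ∧ p 2 = c := by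
  have hp : G.IsStraight 2 (fun i => if i = 0 then a else if i = 1 then b else c) := by
    refine isStraight_of_adj_of_opp (fun i hi => ?_) (fun i hi => ?_)
    · interval_cases i
      exacts [hab, G.opp_adj_right _ _ _ ho]
    · obtain rfl : i = 0 := by omega
      exact ho
  obtain ⟨q, hq, hqp⟩ := hp.exists_extend_s5 (by omega) hm
  exact ⟨q, hq, hqp 0 (by omega), hqp 1 (by omega), hqp 2 le_rfl⟩

theorem IsClosedStraight.isStraight_shift_s5 {q : ℕ → V} (hq : G.IsClosedStraight m q) (a s : ℕ) :
    G.IsStraight s (fun i => q (a + i)) :=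
  isStraight_of_adj_of_opp (fun i _ => hq.1 (a + i)) (fun i _ => hq.2.1 (a + i))

end VeldkampGraph

namespace VeldkampNGon

open VeldkampGraph

variable {V : Type*} {n : ℕ} {p : ℕ → V}

theorem Opp.symm {Γ : VeldkampNGon V n} {x y : V} (h : Γ.Opp x y) : Γ.Opp y x := by
  obtain ⟨p, hp, rfl, rfl⟩ := h
  exact ⟨_, hp.reverse_s5, rfl, by simp⟩

variable (Γ : VeldkampNGon V n)

theorem isStraight_eq_of_endpoints {k : ℕ} (hk : 1 ≤ k) (hkn : k ≤ n - 1) {q : ℕ → V}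
    (hp : Γ.IsStraight k p) (hq : Γ.IsStraight k q) (h0 : q 0 = p 0) (hk' : q k = p k) :
    ∀ i ≤ k, q i = p i :=
  (Γ.vp2 k hk hkn p k q hp le_rfl hq h0 hk').2

theorem exists_isStraight_return (hp : Γ.IsStraight (n + 1) p) :
    ∃ q, Γ.IsStraight (n + 1) q ∧ q 0 = p n ∧ q 1 = p (n + 1) ∧ q n = p 0 ∧ q (n + 1) = p 1 := by
  obtain ⟨C, hC, hCp⟩ := Γ.vp3 p hp
  refine ⟨fun i => C (n + i), hC.isStraight_shift_s5 n _, hCp n (by omega), hCp (n + 1) le_rfl,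
    ?_, ?_⟩
  · show C (n + n) = p 0
    rw [← two_mul, ← zero_add (2 * n), hC.2.2 0, hCp 0 (by omega)]
  · show C (n + (n + 1)) = p 1
    rw [show n + (n + 1) = 1 + 2 * n by omega, hC.2.2 1, hCp 1 (by omega)]

theorem exists_root_turn (hp : Γ.IsStraight n p) {z : V} (hz : Γ.adj (p 0) z)
    (ho : Γ.opp (p 0) (p 1) z) :
    ∃ q, Γ.IsStraight n q ∧ q 0 = p 0 ∧ q 1 = z ∧ q n = p n := by
  have hn := Γ.two_le
  have hsnoc := hp.reverse_s5.snoc (by omega) (z := z) (by simpa using hz)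
    (by simpa [show n - (n - 1) = 1 by omega] using ho)
  obtain ⟨q, hq, hq0, hq1, hqn, -⟩ := Γ.exists_isStraight_return hsnoc
  rw [Function.update_of_ne (by omega), Nat.sub_self] at hq0
  rw [Function.update_self] at hq1
  rw [Function.update_of_ne (by omega), Nat.sub_zero] at hqn
  exact ⟨q, hq.mono_s5 (by omega), hq0, hq1, hqn⟩

theorem exists_root_through (hp : Γ.IsStraight n p) {x : V} (hx : Γ.adj (p 0) x) :
    ∃ q, Γ.IsStraight n q ∧ q 0 = p 0 ∧ q 1 = x ∧ q n = p n := by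
  have hp1 : Γ.adj (p 0) (p 1) := hp.adj (by have := Γ.two_le; omega)
  obtain ⟨z, hz, hzp, hzx⟩ := Γ.plump2 _ _ _ hp1 hx
  obtain ⟨q, hq, hq0, hq1, hqn⟩ := Γ.exists_root_turn hp hz (Γ.opp_symm _ _ _ hzp)
  obtain ⟨r, hr, hr0, hr1, hrn⟩ :=
    Γ.exists_root_turn hq (hq0 ▸ hx) (by rwa [hq0, hq1])
  exact ⟨r, hr, hr0.trans hq0, hr1, hrn.trans hqn⟩

theorem trivialAt_of_opp {v w : V} (hv : Γ.toVeldkampGraph.TrivialAt v) (hwv : Γ.Opp w v) :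
    Γ.toVeldkampGraph.TrivialAt w := by
  obtain ⟨p, hp, rfl, rfl⟩ := hwv
  have hn := Γ.two_le
  intro x y hx hy hxy
  obtain ⟨A, hA, hA0, hA1, hAn⟩ := Γ.exists_root_through hp hx
  obtain ⟨B, hB, hB0, hB1, hBn⟩ := Γ.exists_root_through hp hy
  have hne : A (n - 1) ≠ B (n - 1) := by
    intro h
    have h1 := Γ.isStraight_eq_of_endpoints (by omega) le_rfl (hA.mono_s5 (by omega))
      (hB.mono_s5 (by omega)) (hB0.trans hA0.symm) h.symm 1 (by omega)
    exact hxy (by rw [← hA1, ← hB1, h1])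
  have hAB : Γ.adj (A n) (B (n - 1)) := hAn ▸ hBn ▸ hB.adj_pred (by omega)
  have hopp : Γ.opp (A n) (A (n - 1)) (B (n - 1)) := by
    rw [hAn] at hAB ⊢
    exact hv _ _ (hAn ▸ hA.adj_pred (by omega)) hAB hne
  obtain ⟨q, hq, -, hq1, hqn, hqn1⟩ :=
    Γ.exists_isStraight_return (hA.snoc (by omega) hAB hopp)
  rw [Function.update_self] at hq1
  rw [Function.update_of_ne (by omega)] at hqn hqn1
  -- `q` runs from `v` back to `p 0` along `B`, so its vertex before `p 0` is `y`
  have hqB := Γ.isStraight_eq_of_endpoints (k := n - 1) (by omega) le_rfl (hB.mono_s5 (by omega))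
    ((hq.mono_s5 (k := n) (by omega)).reverse_s5.mono_s5 (by omega))
    (by rw [Nat.sub_zero, hqn, hA0, hB0]) (by rw [Nat.sub_sub_self (by omega), hq1]) 1 (by omega)
  have h := hq.opp (i := n - 1) (by omega)
  rw [show n - 1 + 1 = n by omega, show n - 1 + 2 = n + 1 by omega, hqn, hqn1, hA0, hA1, hqB,
    hB1] at h
  exact Γ.opp_symm _ _ _ h

theorem trivialAt_of_adj_of_adj {v u w : V} (hv : Γ.toVeldkampGraph.TrivialAt v)
    (hvu : Γ.adj v u) (huw : Γ.adj u w) : Γ.toVeldkampGraph.TrivialAt w := by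
  obtain ⟨c, -, hcv, hcw⟩ := Γ.plump2 u v w (Γ.adj_symm _ _ hvu) huw
  obtain ⟨S, hS, rfl, rfl, rfl⟩ := exists_isStraight_of_opp hvu (Γ.opp_symm _ _ _ hcv) Γ.two_le
  have hSn := Γ.trivialAt_of_opp hv (Opp.symm ⟨S, hS, rfl, rfl⟩)
  have hT := hS.update_zero (Γ.adj_symm _ _ huw) (Γ.opp_symm _ _ _ hcw)
  exact Γ.trivialAt_of_opp hSn
    ⟨_, hT, Function.update_self .., Function.update_of_ne (by have := Γ.two_le; omega) ..⟩

theorem trivialAt_of_walk_even {k : ℕ} (hk : Even k) (hp : ∀ i < k, Γ.adj (p i) (p (i + 1)))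
    (h0 : Γ.toVeldkampGraph.TrivialAt (p 0)) : Γ.toVeldkampGraph.TrivialAt (p k) := by
  obtain ⟨m, rfl⟩ := hk
  induction m with
  | zero => exact h0
  | succ m ih =>
    rw [show m + 1 + (m + 1) = m + m + 1 + 1 by omega]
    exact Γ.trivialAt_of_adj_of_adj (ih fun i hi => hp i (by omega)) (hp _ (by omega))
      (hp _ (by omega))

theorem trivialAt_of_adj_of_odd (hn : Odd n) {v u : V} (hv : Γ.toVeldkampGraph.TrivialAt v)
    (hvu : Γ.adj v u) : Γ.toVeldkampGraph.TrivialAt u := by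
  have h2 := Γ.two_le
  obtain ⟨S, hS, rfl, rfl⟩ := exists_isStraight_of_adj hvu (m := n) (by omega)
  have hSn := Γ.trivialAt_of_opp hv (Opp.symm ⟨S, hS, rfl, rfl⟩)
  have h := Γ.trivialAt_of_walk_even (p := fun i => S (n - i)) (Nat.Odd.sub_odd hn odd_one)
    (fun i hi => hS.reverse_s5.adj (by omega)) hSn
  rwa [Nat.sub_sub_self (by omega)] at h

theorem trivialAt_of_walk_of_odd (hn : Odd n) {k : ℕ} (hp : ∀ i < k, Γ.adj (p i) (p (i + 1)))
    (h0 : Γ.toVeldkampGraph.TrivialAt (p 0)) : Γ.toVeldkampGraph.TrivialAt (p k) := by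
  induction k with
  | zero => exact h0
  | succ k ih => exact Γ.trivialAt_of_adj_of_odd hn (ih fun i hi => hp i (by omega)) (hp k (by omega))

end VeldkampNGon

/-- If the local opposition relation is trivial at `v`, it is trivial at every
vertex at even distance from `v`; if moreover `n` is odd, it is trivial at
every vertex. -/
theorem stmt5 {V : Type*} {n : ℕ} (Γ : VeldkampNGon V n) (v : V)
    (h : Γ.toVeldkampGraph.TrivialAt v) :
    (∀ w k, Even k → Γ.DistEq v w k → Γ.toVeldkampGraph.TrivialAt w) ∧
    (Odd n → ∀ w : V, Γ.toVeldkampGraph.TrivialAt w) := by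
  refine ⟨fun w k hk hvw => ?_, fun hn w => ?_⟩
  · obtain ⟨P, hP, rfl, rfl⟩ := hvw.1
    exact Γ.trivialAt_of_walk_even hk hP.1 h
  · obtain ⟨s, P, hP, rfl, rfl⟩ := Γ.connected v w
    exact Γ.trivialAt_of_walk_of_odd hn hP.1 h
end

section
/- A green Veldkamp quadrangle contains no circuits of length 4. -/
/-- A green Veldkamp quadrangle: a Veldkamp 4-gon with a bipartition into
points `Pt` and lines (the complement), whose local opposition relations at
lines are trivial. -/
structure GreenVQ (V : Type*) extends VeldkampNGon V 4 where
  Pt : Set V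
  part : ∀ u v, adj u v → (u ∈ Pt ↔ v ∉ Pt)
  green : ∀ x, x ∉ Pt → ∀ a b, adj x a → adj x b → a ≠ b → opp x a b

namespace GreenVQ

variable {V : Type*} (Γ : GreenVQ V)

/-- A weed: a non-straight 4-path `(a,x,b,y,c)` with `a,b,c` points and
`dist (a, c) = 4`. -/
def IsWeed (p : ℕ → V) : Prop :=
  Γ.IsPath 4 p ∧ ¬ Γ.IsStraight 4 p ∧ p 0 ∈ Γ.Pt ∧ p 2 ∈ Γ.Pt ∧ p 4 ∈ Γ.Pt ∧
    Γ.DistEq (p 0) (p 4) 4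

/-- `a ≃ b` for points: `a = b` or some weed begins at `a` and ends at `b`. -/
def PtSim (a b : V) : Prop :=
  a = b ∨ ∃ p, Γ.IsWeed p ∧ p 0 = a ∧ p 4 = b

/-- `x ~ y` for lines: some weed contains both `x` and `y`. -/
def LnSim (x y : V) : Prop :=
  ∃ p, Γ.IsWeed p ∧ ((p 1 = x ∧ p 3 = y) ∨ (p 1 = y ∧ p 3 = x))

/-- Flat: no two vertices have the same set of opposite vertices. -/
def Flat : Prop := ∀ x y : V, Γ.opSet x = Γ.opSet y → x = y

end GreenVQ

/-! In a green quadrangle any two distinct points `a`, `b` on a line `x` are opposite at `x`,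
so `a, x, b` is a straight 2-path. By (VP2) straight paths of length less than 4 are the
unique shortest paths between their endpoints, so two points lie on at most one common line.
A 4-circuit has two opposite corners that are distinct lines through the same two distinct
points. -/

namespace VeldkampGraph

variable {V : Type*} (Γ : VeldkampGraph V)

theorem isStraight_two_of_opp {p : ℕ → V} (h : Γ.opp (p 1) (p 0) (p 2)) : Γ.IsStraight 2 p := by
  refine ⟨⟨fun i hi => ?_, fun i hi => ?_⟩, fun i hi => ?_⟩
  · obtain rfl | rfl : i = 0 ∨ i = 1 := by omega
    · exact Γ.adj_symm _ _ (Γ.opp_adj_left _ _ _ h)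
    · exact Γ.opp_adj_right _ _ _ h
  · obtain rfl : i = 0 := by omega
    exact fun h02 => Γ.opp_irrefl _ _ (h02 ▸ h)
  · obtain rfl : i = 0 := by omega
    exact h

end VeldkampGraph

namespace VeldkampNGon

variable {V : Type*} {n : ℕ} (Γ : VeldkampNGon V n)

theorem eq_of_opp_of_opp (hn : 3 ≤ n) {a b x y : V} (hx : Γ.opp x a b) (hy : Γ.opp y a b) :
    x = y := by
  let p : ℕ → V := fun i => if i = 0 then a else if i = 1 then x else b
  let q : ℕ → V := fun i => if i = 0 then a else if i = 1 then y else b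
  have hp : Γ.IsStraight 2 p := Γ.isStraight_two_of_opp (by simpa [p] using hx)
  have hq : Γ.IsStraight 2 q := Γ.isStraight_two_of_opp (by simpa [q] using hy)
  have hmid := (Γ.vp2 2 (by norm_num) (by omega) p 2 q hp le_rfl hq rfl rfl).2 1 (by norm_num)
  simpa [p, q] using hmid.symm

end VeldkampNGon

namespace GreenVQ

variable {V : Type*} (Γ : GreenVQ V)

theorem eq_of_adj_of_notMem_pt {a b x y : V} (hab : a ≠ b) (hx : x ∉ Γ.Pt) (hy : y ∉ Γ.Pt)
    (hxa : Γ.adj x a) (hxb : Γ.adj x b) (hya : Γ.adj y a) (hyb : Γ.adj y b) : x = y :=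
  Γ.eq_of_opp_of_opp (by norm_num) (Γ.green x hx a b hxa hxb hab) (Γ.green y hy a b hya hyb hab)

end GreenVQ

/-- A green Veldkamp quadrangle contains no circuits of length 4. -/
theorem stmt6 {V : Type*} (Γ : GreenVQ V) : ¬ ∃ q : ℕ → V, Γ.IsCircuit 4 q := by
  rintro ⟨q, hadj, hper, hinj⟩
  have hadj_rev : ∀ i, Γ.adj (q (i + 1)) (q i) := fun i => Γ.adj_symm _ _ (hadj i)
  have h30 : Γ.adj (q 3) (q 0) := hper 0 ▸ hadj 3
  have h02 : q 0 ≠ q 2 := fun h => absurd (hinj 0 2 (by norm_num) (by norm_num) h) (by norm_num)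
  have h13 : q 1 ≠ q 3 := fun h => absurd (hinj 1 3 (by norm_num) (by norm_num) h) (by norm_num)
  by_cases h1 : q 1 ∈ Γ.Pt
  · have h0 : q 0 ∉ Γ.Pt := fun h0 => (Γ.part _ _ (hadj 0)).mp h0 h1
    have h2 : q 2 ∉ Γ.Pt := (Γ.part _ _ (hadj 1)).mp h1
    exact h02 (Γ.eq_of_adj_of_notMem_pt h13 h0 h2 (hadj 0) (Γ.adj_symm _ _ h30) (hadj_rev 1)
      (hadj 2))
  · have h0 : q 0 ∈ Γ.Pt := (Γ.part _ _ (hadj 0)).mpr h1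
    have h3 : q 3 ∉ Γ.Pt := fun h3 => (Γ.part _ _ h30).mp h3 h0
    exact h13 (Γ.eq_of_adj_of_notMem_pt h02 h1 h3 (hadj_rev 0) (hadj 1) h30 (hadj_rev 2))
end

section
/- In a thick non-degenerate polar space, for every line x there exists a line y such that x^⊥ ∩ y^⊥ is a thick non-degenerate polar space and no point of x is collinear with every point of y; moreover, for such x,y, every singular plane containing x meets x^⊥ ∩ y^⊥ in exactly one point. -/
/-- A line space: a set of points together with a set of lines, each line a
set of at least two points. -/
structure LineSpace (P : Type*) where
  lines : Set (Set P)
  two_points : ∀ x ∈ lines, ∃ a b, a ∈ x ∧ b ∈ x ∧ a ≠ b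

namespace LineSpace

variable {P : Type*} (S : LineSpace P)

/-- Two points are collinear if they are equal or some line contains both. -/
def Col (a b : P) : Prop := a = b ∨ ∃ x ∈ S.lines, a ∈ x ∧ b ∈ x

/-- `Z^⊥`: the set of points collinear with every point of `Z`. -/
def perp (Z : Set P) : Set P := {a | ∀ b ∈ Z, S.Col a b}

/-- The Buekenhout-Shult axiom: for every point `a` and line `x`, either
exactly one point of `x` is collinear with `a`, or all points of `x` are. -/
def IsPolar : Prop :=
  ∀ (a : P), ∀ x ∈ S.lines, (∃! b, b ∈ x ∧ S.Col a b) ∨ ∀ b ∈ x, S.Col a b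

/-- Thick: every line has at least 3 points. -/
def Thick : Prop :=
  ∀ x ∈ S.lines, ∃ a b c, a ∈ x ∧ b ∈ x ∧ c ∈ x ∧ a ≠ b ∧ a ≠ c ∧ b ≠ c

/-- Non-degenerate: no point is collinear with all points. -/
def NonDeg : Prop := ∀ a : P, ∃ b : P, ¬ S.Col a b

/-- A subspace: every line is contained in it or meets it in at most one point. -/
def IsSubspace (X : Set P) : Prop :=
  ∀ x ∈ S.lines, x ⊆ X ∨ ∀ a ∈ x ∩ X, ∀ b ∈ x ∩ X, a = b

/-- Collinearity inside the induced subspace on `X`. -/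
def ColIn (X : Set P) (a b : P) : Prop :=
  a = b ∨ ∃ x ∈ S.lines, x ⊆ X ∧ a ∈ x ∧ b ∈ x

/-- The induced line space on `X` (with the lines contained in `X`) is a
thick non-degenerate polar space. -/
def InducedThickNonDegPolar (X : Set P) : Prop :=
  (∀ x ∈ S.lines, x ⊆ X → ∃ a b c, a ∈ x ∧ b ∈ x ∧ c ∈ x ∧ a ≠ b ∧ a ≠ c ∧ b ≠ c) ∧
  (∀ a ∈ X, ∀ x ∈ S.lines, x ⊆ X →
    (∃! b, b ∈ x ∧ S.ColIn X a b) ∨ ∀ b ∈ x, S.ColIn X a b) ∧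
  (∀ a ∈ X, ∃ b ∈ X, ¬ S.ColIn X a b)

/-- A singular plane: a singular subspace that is a projective plane, i.e. a
linear space containing at least two lines in which any two lines meet. -/
def IsSingularPlane (E : Set P) : Prop :=
  S.IsSubspace E ∧ (∀ a ∈ E, ∀ b ∈ E, S.Col a b) ∧
  (∀ a ∈ E, ∀ b ∈ E, a ≠ b → ∃ x ∈ S.lines, x ⊆ E ∧ a ∈ x ∧ b ∈ x) ∧
  (∃ x y, x ∈ S.lines ∧ y ∈ S.lines ∧ x ⊆ E ∧ y ⊆ E ∧ x ≠ y) ∧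
  (∀ x y, x ∈ S.lines → y ∈ S.lines → x ⊆ E → y ⊆ E → (x ∩ y).Nonempty)

end LineSpace

/-!
Choose `y` opposite `x`: every point of `x` misses some point of `y`. If `a ∈ x` and `t ∈ y`
are not collinear and `c ∈ x`, `s ∈ y` are the points collinear with `t` and `a`, then
`x^⊥ ∩ y^⊥ = {a, t}^⊥ ∩ {c, s}^⊥` with `c`, `s` not collinear. So non-degeneracy of
`x^⊥ ∩ y^⊥` follows from applying twice the fact that, inside a non-degenerate subspace `W`,
the subspace `W ∩ {u, v}^⊥` of a non-collinear pair `u, v` is again non-degenerate. In a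
singular plane `E ⊇ x`, a point `t ∈ y` is collinear with a whole line of `E`, and a second
point of `y` is collinear with a point of that line, which then lies in `y^⊥`; two such points
would span a line of `E` meeting `x` inside `y^⊥`.
-/

open Set

namespace LineSpace

variable {P : Type*} {S : LineSpace P}

def NonDegOn (S : LineSpace P) (W : Set P) : Prop := ∀ a ∈ W, ∃ b ∈ W, ¬ S.Col a b

theorem Col.symm {a b : P} (h : S.Col a b) : S.Col b a := by
  rcases h with rfl | ⟨ℓ, hℓ, ha, hb⟩
  · exact Or.inl rfl
  · exact Or.inr ⟨ℓ, hℓ, hb, ha⟩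

theorem col_of_mem {ℓ : Set P} (hℓ : ℓ ∈ S.lines) {a b : P} (ha : a ∈ ℓ) (hb : b ∈ ℓ) :
    S.Col a b :=
  Or.inr ⟨ℓ, hℓ, ha, hb⟩

theorem Col.exists_line {a b : P} (h : S.Col a b) (hab : a ≠ b) :
    ∃ ℓ ∈ S.lines, a ∈ ℓ ∧ b ∈ ℓ :=
  h.resolve_left hab

theorem exists_ne_mem_of_mem_lines {ℓ : Set P} (hℓ : ℓ ∈ S.lines) (a : P) :
    ∃ b ∈ ℓ, b ≠ a := by
  obtain ⟨b, c, hb, hc, hbc⟩ := S.two_points ℓ hℓ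
  by_cases hba : b = a
  · exact ⟨c, hc, fun hca => hbc (hba.trans hca.symm)⟩
  · exact ⟨b, hb, hba⟩

theorem mem_perp_pair {u v b : P} : b ∈ S.perp {u, v} ↔ S.Col b u ∧ S.Col b v := by
  simp [perp]

theorem IsSubspace.subset_of_mem {X ℓ : Set P} (hX : S.IsSubspace X) (hℓ : ℓ ∈ S.lines)
    {a b : P} (ha : a ∈ ℓ) (hb : b ∈ ℓ) (hab : a ≠ b) (haX : a ∈ X) (hbX : b ∈ X) : ℓ ⊆ X :=
  (hX ℓ hℓ).resolve_right fun h => hab (h a ⟨ha, haX⟩ b ⟨hb, hbX⟩)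

theorem isSubspace_univ : S.IsSubspace univ :=
  fun ℓ _ => Or.inl (subset_univ ℓ)

theorem IsSubspace.inter {X Y : Set P} (hX : S.IsSubspace X) (hY : S.IsSubspace Y) :
    S.IsSubspace (X ∩ Y) := by
  intro ℓ hℓ
  rcases hX ℓ hℓ with hℓX | hX1
  · rcases hY ℓ hℓ with hℓY | hY1
    · exact Or.inl (subset_inter hℓX hℓY)
    · exact Or.inr fun a ha b hb => hY1 a ⟨ha.1, ha.2.2⟩ b ⟨hb.1, hb.2.2⟩
  · exact Or.inr fun a ha b hb => hX1 a ⟨ha.1, ha.2.1⟩ b ⟨hb.1, hb.2.1⟩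

theorem IsSubspace.colIn_iff {X : Set P} (hX : S.IsSubspace X) {a b : P} (ha : a ∈ X)
    (hb : b ∈ X) : S.ColIn X a b ↔ S.Col a b := by
  refine ⟨fun h => ?_, fun h => ?_⟩
  · rcases h with rfl | ⟨ℓ, hℓ, -, haℓ, hbℓ⟩
    · exact Or.inl rfl
    · exact col_of_mem hℓ haℓ hbℓ
  · by_cases hab : a = b
    · exact Or.inl hab
    · obtain ⟨ℓ, hℓ, haℓ, hbℓ⟩ := h.exists_line hab
      exact Or.inr ⟨ℓ, hℓ, hX.subset_of_mem hℓ haℓ hbℓ hab ha hb, haℓ, hbℓ⟩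

namespace IsPolar

variable (hpol : S.IsPolar)
include hpol

theorem exists_col {ℓ : Set P} (hℓ : ℓ ∈ S.lines) (a : P) : ∃ b ∈ ℓ, S.Col a b := by
  rcases hpol a ℓ hℓ with ⟨b, hb, -⟩ | hall
  · exact ⟨b, hb⟩
  · obtain ⟨b, -, hb, -⟩ := S.two_points ℓ hℓ
    exact ⟨b, hb, hall b hb⟩

theorem forall_col_of_col_of_col {ℓ : Set P} (hℓ : ℓ ∈ S.lines) {a b c : P} (hb : b ∈ ℓ)
    (hc : c ∈ ℓ) (hbc : b ≠ c) (hab : S.Col a b) (hac : S.Col a c) : ∀ d ∈ ℓ, S.Col a d := by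
  rcases hpol a ℓ hℓ with ⟨w, -, huniq⟩ | hall
  · exact absurd ((huniq b ⟨hb, hab⟩).trans (huniq c ⟨hc, hac⟩).symm) hbc
  · exact hall

theorem perp_eq_perp_pair {ℓ : Set P} (hℓ : ℓ ∈ S.lines) {a b : P} (ha : a ∈ ℓ) (hb : b ∈ ℓ)
    (hab : a ≠ b) : S.perp ℓ = S.perp {a, b} := by
  ext c
  rw [mem_perp_pair]
  refine ⟨fun hc => ⟨hc a ha, hc b hb⟩, fun ⟨hca, hcb⟩ d hd => ?_⟩
  exact hpol.forall_col_of_col_of_col hℓ ha hb hab hca hcb d hd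

theorem isSubspace_perp (Z : Set P) : S.IsSubspace (S.perp Z) := by
  intro ℓ hℓ
  rw [or_iff_not_imp_right]
  push Not
  rintro ⟨a, ⟨haℓ, ha⟩, b, ⟨hbℓ, hb⟩, hab⟩ c hc z hz
  exact (hpol.forall_col_of_col_of_col hℓ haℓ hbℓ hab (ha z hz).symm (hb z hz).symm c hc).symm

theorem exists_mem_perp_of_forall_col {K y : Set P} (hK : K ∈ S.lines) (hy : y ∈ S.lines)
    {t : P} (ht : t ∈ y) (htK : ∀ k ∈ K, S.Col t k) : ∃ g ∈ K, g ∈ S.perp y := by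
  obtain ⟨t', ht', ht't⟩ := S.exists_ne_mem_of_mem_lines hy t
  obtain ⟨g, hgK, ht'g⟩ := hpol.exists_col hK t'
  rw [hpol.perp_eq_perp_pair hy ht ht' ht't.symm]
  exact ⟨g, hgK, mem_perp_pair.2 ⟨(htK g hgK).symm, ht'g.symm⟩⟩

theorem exists_mem_perp_pair_not_col {W : Set P} (hW : S.IsSubspace W) {u v q a : P}
    (hu : u ∈ W) (hq : q ∈ W) (huv : ¬ S.Col u v) (hqu : S.Col q u) (hau : S.Col a u)
    (haq : ¬ S.Col a q) : ∃ b ∈ W ∩ S.perp {u, v}, ¬ S.Col a b := by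
  have hqu' : q ≠ u := by rintro rfl; exact haq hau
  obtain ⟨L, hL, hqL, huL⟩ := hqu.exists_line hqu'
  obtain ⟨b, hbL, hvb⟩ := hpol.exists_col hL v
  have hbu : b ≠ u := by rintro rfl; exact huv hvb.symm
  refine ⟨b, ⟨hW.subset_of_mem hL hqL huL hqu' hq hu hbL, ?_⟩, fun hab => ?_⟩
  · exact mem_perp_pair.2 ⟨col_of_mem hL hbL huL, hvb.symm⟩
  · exact haq (hpol.forall_col_of_col_of_col hL huL hbL hbu.symm hau hab q hqL)

theorem exists_col_not_col {W : Set P} (hW : S.IsSubspace W) (hnd : S.NonDegOn W)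
    {u v a : P} (hu : u ∈ W) (ha : a ∈ W) (huv : ¬ S.Col u v) (hau : S.Col a u)
    (hav : S.Col a v) : ∃ q ∈ W, S.Col q v ∧ ¬ S.Col a q := by
  obtain ⟨p, hp, hap⟩ := hnd a ha
  have hau' : a ≠ u := by rintro rfl; exact huv hav
  obtain ⟨A, hA, haA, huA⟩ := hau.exists_line hau'
  obtain ⟨w, hwA, hpw⟩ := hpol.exists_col hA p
  have hwa : w ≠ a := by rintro rfl; exact hap hpw.symm
  have hpw' : p ≠ w := by rintro rfl; exact hap (col_of_mem hA haA hwA)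
  obtain ⟨B, hB, hpB, hwB⟩ := hpw.exists_line hpw'
  have hw : w ∈ W := hW.subset_of_mem hA haA huA hau' ha hu hwA
  obtain ⟨r, hrB, hvr⟩ := hpol.exists_col hB v
  have hrw : r ≠ w := by
    rintro rfl
    exact huv (hpol.forall_col_of_col_of_col hA haA hwA hwa.symm hav.symm hvr u huA).symm
  refine ⟨r, hW.subset_of_mem hB hpB hwB hpw' hp hw hrB, hvr.symm, fun har => hap ?_⟩
  exact hpol.forall_col_of_col_of_col hB hwB hrB hrw.symm (col_of_mem hA haA hwA) har p hpB

end IsPolar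

theorem NonDegOn.inter_perp_pair (hpol : S.IsPolar) {W : Set P} (hW : S.IsSubspace W)
    (hnd : S.NonDegOn W) {u v : P} (hu : u ∈ W) (hv : v ∈ W) (huv : ¬ S.Col u v) :
    S.NonDegOn (W ∩ S.perp {u, v}) := by
  rintro a ⟨ha, hauv⟩
  obtain ⟨hau, hav⟩ := mem_perp_pair.1 hauv
  obtain ⟨q, hq, hqv, haq⟩ := hpol.exists_col_not_col hW hnd hu ha huv hau hav
  rw [pair_comm]
  exact hpol.exists_mem_perp_pair_not_col hW hv hq (fun h => huv h.symm) hqv hav haq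

theorem inducedThickNonDegPolar_of_isSubspace (hpol : S.IsPolar) (hthick : S.Thick)
    {X : Set P} (hX : S.IsSubspace X) (hnd : S.NonDegOn X) : S.InducedThickNonDegPolar X := by
  refine ⟨fun ℓ hℓ _ => hthick ℓ hℓ, fun a ha ℓ hℓ hℓX => ?_, fun a ha => ?_⟩
  · have hcol : ∀ b ∈ ℓ, S.ColIn X a b ↔ S.Col a b := fun b hb => hX.colIn_iff ha (hℓX hb)
    have hcol' : ∀ b, b ∈ ℓ ∧ S.ColIn X a b ↔ b ∈ ℓ ∧ S.Col a b :=
      fun b => and_congr_right (hcol b)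
    simp only [hcol']
    rw [forall₂_congr hcol]
    exact hpol a ℓ hℓ
  · obtain ⟨b, hb, hab⟩ := hnd a ha
    exact ⟨b, hb, (hX.colIn_iff ha hb).not.2 hab⟩

theorem exists_line_forall_not_mem_perp (hpol : S.IsPolar) (hnd : S.NonDeg) {x : Set P}
    (hx : x ∈ S.lines) : ∃ y ∈ S.lines, ∀ a ∈ x, a ∉ S.perp y := by
  obtain ⟨a₀, -, ha₀, -⟩ := S.two_points x hx
  obtain ⟨p, hp⟩ := hnd a₀
  obtain ⟨u, hu, hpu⟩ := hpol.exists_col hx p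
  have hu_unique : ∀ a ∈ x, S.Col a p → a = u := by
    intro a ha hap
    by_contra hau
    exact hp (hpol.forall_col_of_col_of_col hx ha hu hau hap.symm hpu a₀ ha₀).symm
  have hpu' : p ≠ u := by rintro rfl; exact hp (col_of_mem hx ha₀ hu)
  -- `y` joins a point `t ∉ u^⊥` to the point of the line `pu` collinear with it
  obtain ⟨M, hM, hpM, huM⟩ := hpu.exists_line hpu'
  obtain ⟨t, ht⟩ := hnd u
  obtain ⟨m, hmM, htm⟩ := hpol.exists_col hM t
  have hmu : m ≠ u := by rintro rfl; exact ht htm.symm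
  have htm' : t ≠ m := by rintro rfl; exact ht (col_of_mem hM huM hmM)
  obtain ⟨y, hy, hty, hmy⟩ := htm.exists_line htm'
  refine ⟨y, hy, fun a ha hay => ?_⟩
  by_cases hau : a = u
  · subst hau
    exact ht (hay t hty)
  · have hap := hpol.forall_col_of_col_of_col hM huM hmM hmu.symm (col_of_mem hx ha hu)
      (hay m hmy) p hpM
    exact hau (hu_unique a ha hap)

theorem nonDegOn_perp_inter_perp (hpol : S.IsPolar) (hnd : S.NonDeg) {x y : Set P}
    (hx : x ∈ S.lines) (hy : y ∈ S.lines) (hxy : ∀ a ∈ x, a ∉ S.perp y) :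
    S.NonDegOn (S.perp x ∩ S.perp y) := by
  obtain ⟨a, -, ha, -⟩ := S.two_points x hx
  obtain ⟨t, ht, hat⟩ : ∃ t ∈ y, ¬ S.Col a t := by simpa [perp] using hxy a ha
  obtain ⟨c, hc, htc⟩ := hpol.exists_col hx t
  obtain ⟨s, hs, has⟩ := hpol.exists_col hy a
  have hca : c ≠ a := by rintro rfl; exact hat htc.symm
  have hst : s ≠ t := by rintro rfl; exact hat has
  have hcs : ¬ S.Col c s := by
    intro hcs
    refine hxy c hc ?_
    rw [hpol.perp_eq_perp_pair hy ht hs hst.symm]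
    exact mem_perp_pair.2 ⟨htc.symm, hcs⟩
  have hX : S.perp x ∩ S.perp y = (univ ∩ S.perp {a, t}) ∩ S.perp {c, s} := by
    rw [hpol.perp_eq_perp_pair hx ha hc hca.symm, hpol.perp_eq_perp_pair hy ht hs hst.symm]
    ext b
    simp only [mem_inter_iff, mem_perp_pair, mem_univ, true_and]
    tauto
  have hW : S.IsSubspace (univ ∩ S.perp {a, t}) :=
    isSubspace_univ.inter (hpol.isSubspace_perp _)
  have hnd_univ : S.NonDegOn univ := fun b _ => (hnd b).imp fun _ h => ⟨trivial, h⟩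
  have hndW : S.NonDegOn (univ ∩ S.perp {a, t}) :=
    hnd_univ.inter_perp_pair hpol isSubspace_univ trivial trivial hat
  rw [hX]
  refine hndW.inter_perp_pair hpol hW ⟨trivial, ?_⟩ ⟨trivial, ?_⟩ hcs
  · exact mem_perp_pair.2 ⟨col_of_mem hx hc ha, htc.symm⟩
  · exact mem_perp_pair.2 ⟨has.symm, col_of_mem hy hs ht⟩

namespace IsSingularPlane

variable {E : Set P} (hE : S.IsSingularPlane E)
include hE

theorem subset_perp {x : Set P} (hxE : x ⊆ E) : E ⊆ S.perp x :=
  fun c hc a ha => hE.2.1 c hc a (hxE ha)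

theorem exists_not_mem_line : ∃ e ∈ E, ∃ L ∈ S.lines, L ⊆ E ∧ e ∉ L := by
  obtain ⟨L₁, L₂, hL₁, hL₂, hL₁E, hL₂E, hne⟩ := hE.2.2.2.1
  by_cases h : L₁ ⊆ L₂
  · obtain ⟨e, he₂, he₁⟩ := not_subset.1 fun h' => hne (h.antisymm h')
    exact ⟨e, hL₂E he₂, L₁, hL₁, hL₁E, he₁⟩
  · obtain ⟨e, he₁, he₂⟩ := not_subset.1 h
    exact ⟨e, hL₁E he₁, L₂, hL₂, hL₂E, he₂⟩

theorem exists_mem_perp (hpol : S.IsPolar) {y : Set P} (hy : y ∈ S.lines) :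
    ∃ c ∈ E, c ∈ S.perp y := by
  obtain ⟨e, he, L, hL, hLE, heL⟩ := hE.exists_not_mem_line
  obtain ⟨t, ht, het⟩ := hpol.exists_col hy e
  obtain ⟨f, hf, htf⟩ := hpol.exists_col hL t
  have hef : e ≠ f := by rintro rfl; exact heL hf
  obtain ⟨K, hK, hKE, heK, hfK⟩ := hE.2.2.1 e he f (hLE hf) hef
  have htK := hpol.forall_col_of_col_of_col hK heK hfK hef het.symm htf
  obtain ⟨g, hg, hgy⟩ := hpol.exists_mem_perp_of_forall_col hK hy ht htK
  exact ⟨g, hKE hg, hgy⟩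

theorem eq_of_mem_perp (hpol : S.IsPolar) {x y : Set P} (hx : x ∈ S.lines) (hxE : x ⊆ E)
    (hxy : ∀ a ∈ x, a ∉ S.perp y) {c e : P} (hc : c ∈ E) (he : e ∈ E) (hcy : c ∈ S.perp y)
    (hey : e ∈ S.perp y) : c = e := by
  by_contra hce
  obtain ⟨L, hL, hLE, hcL, heL⟩ := hE.2.2.1 c hc e he hce
  obtain ⟨a, hax, haL⟩ := hE.2.2.2.2 x L hx hL hxE hLE
  exact hxy a hax ((hpol.isSubspace_perp y).subset_of_mem hL hcL heL hce hcy hey haL)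

end IsSingularPlane

end LineSpace

/-- In a thick non-degenerate polar space, for every line `x` there is a line
`y` such that `x^⊥ ∩ y^⊥` is a thick non-degenerate polar space and no point
of `x` is collinear with every point of `y`; moreover, for such `x, y`, every
singular plane containing `x` meets `x^⊥ ∩ y^⊥` in exactly one point. -/
theorem stmt19 {P : Type*} (S : LineSpace P) (hpol : S.IsPolar)
    (hthick : S.Thick) (hnd : S.NonDeg) (x : Set P) (hx : x ∈ S.lines) :
    ∃ y ∈ S.lines,
      S.InducedThickNonDegPolar (S.perp x ∩ S.perp y) ∧
      (∀ a ∈ x, a ∉ S.perp y) ∧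
      ∀ E : Set P, S.IsSingularPlane E → x ⊆ E →
        ∃! c : P, c ∈ E ∩ S.perp x ∩ S.perp y := by
  obtain ⟨y, hy, hxy⟩ := S.exists_line_forall_not_mem_perp hpol hnd hx
  refine ⟨y, hy, ?_, hxy, fun E hE hxE => ?_⟩
  · exact S.inducedThickNonDegPolar_of_isSubspace hpol hthick
      ((hpol.isSubspace_perp x).inter (hpol.isSubspace_perp y))
      (S.nonDegOn_perp_inter_perp hpol hnd hx hy hxy)
  · obtain ⟨c, hc, hcy⟩ := hE.exists_mem_perp hpol hy
    exact ⟨c, ⟨⟨hc, hE.subset_perp hxE hc⟩, hcy⟩,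
      fun e he => hE.eq_of_mem_perp hpol hx hxE hxy he.1.1 hc he.2 hcy⟩
end
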